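/- arXiv:2310.13369 — 3 statements merged into one kernel-verified Lean document; each statement's English description precedes it below -/
import Mathlib

section
/- Let X : [0,T] → ℝ^d be a continuously differentiable path and let φ : [0,T] → [0,T] be continuously differentiable, monotonically increasing, and surjective (so φ(0) = 0 and φ(T) = T). Then for every n ∈ ℕ, the level-n signature of the reparameterized path X ∘ φ over [0,T] equals the level-n signature of X over [0,T]: Sig^n_{0,T}(X ∘ φ) = Sig^n_{0,T}(X). -/
open MeasureTheory intervalIntegral

/-- The signature coordinate `Sig^I_{s,t}(X)` of a path `X : ℝ → ℝ^d`, indexed by a word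
`I = (i₁, …, iₙ)` over the alphabet `Fin d`.  It is the iterated integral
`∫_{s < u₁ < ⋯ < uₙ < t} X'_{i₁}(u₁) ⋯ X'_{iₙ}(uₙ) du₁ ⋯ duₙ`, here realized by
integrating over the first variable:
`Sig^{i :: w}_{s,t}(X) = ∫_s^t X'_i(u) · Sig^w_{u,t}(X) du`, with `Sig^∅_{s,t}(X) = 1`. -/
noncomputable def sigCoord {d : ℕ} (X : ℝ → Fin d → ℝ) : ℝ → ℝ → List (Fin d) → ℝ
  | _, _, [] => 1
  | s, t, i :: w => ∫ u in s..t, deriv (fun v => X v i) u * sigCoord X u t w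

lemma deriv_coord_continuous {d : ℕ} {X : ℝ → Fin d → ℝ} (hX : ContDiff ℝ 1 X) (i : Fin d) :
    Continuous (deriv (fun v => X v i)) := by
  have h : ContDiff ℝ 1 (fun v => X v i) :=
    (ContinuousLinearMap.proj (R := ℝ) (φ := fun _ : Fin d => ℝ) i).contDiff.comp hX
  exact h.continuous_deriv le_rfl

/-- Continuity of `s ↦ Sig^w_{s,t}(X)`. -/
lemma sigCoord_continuous {d : ℕ} {X : ℝ → Fin d → ℝ} (hX : ContDiff ℝ 1 X) (t : ℝ) :
    ∀ w : List (Fin d), Continuous (fun s => sigCoord X s t w) := by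
  intro w
  induction w with
  | nil => simpa [sigCoord] using continuous_const
  | cons i w ih =>
    have hg : Continuous (fun u => deriv (fun v => X v i) u * sigCoord X u t w) :=
      (deriv_coord_continuous hX i).mul ih
    have key : (fun s => sigCoord X s t (i :: w)) =
        fun s => (∫ u in (0:ℝ)..t, deriv (fun v => X v i) u * sigCoord X u t w)
          - ∫ u in (0:ℝ)..s, deriv (fun v => X v i) u * sigCoord X u t w := by
      funext s
      rw [integral_interval_sub_left (hg.intervalIntegrable _ _) (hg.intervalIntegrable _ _)]
      rfl
    rw [key]
    exact continuous_const.sub (intervalIntegral.continuous_primitive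
      (fun a b => hg.intervalIntegrable a b) 0)

/-- **Invariance of the signature under time reparameterization.**
Let `X : [0,T] → ℝ^d` be a continuously differentiable path and `φ : [0,T] → [0,T]` be
continuously differentiable, monotonically increasing, and surjective (hence `φ 0 = 0` and
`φ T = T`).  Then for every `n ∈ ℕ` the level-`n` signature of the reparameterized path
`X ∘ φ` over `[0,T]` coincides with that of `X`, i.e. every signature coordinate indexed by a
word of length `n` coincides: `Sig^w_{0,T}(X ∘ φ) = Sig^w_{0,T}(X)`. -/
theorem sig_invariant_under_reparameterization {d : ℕ} (T : ℝ) (hT : 0 ≤ T)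
    (X : ℝ → Fin d → ℝ) (hX : ContDiff ℝ 1 X)
    (φ : ℝ → ℝ) (hφ : ContDiff ℝ 1 φ)
    (hφmono : MonotoneOn φ (Set.Icc 0 T))
    (hφmaps : Set.MapsTo φ (Set.Icc 0 T) (Set.Icc 0 T))
    (hφsurj : Set.SurjOn φ (Set.Icc 0 T) (Set.Icc 0 T)) :
    ∀ (n : ℕ) (w : List (Fin d)), w.length = n →
      sigCoord (fun t => X (φ t)) 0 T w = sigCoord X 0 T w := by
  have hmemT : T ∈ Set.Icc 0 T := ⟨hT, le_rfl⟩
  have hmem0 : (0:ℝ) ∈ Set.Icc 0 T := ⟨le_rfl, hT⟩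
  -- φ T = T
  have hφT : φ T = T := by
    obtain ⟨x, hx, hfx⟩ := hφsurj hmemT
    have h1 : φ x ≤ φ T := hφmono hx hmemT hx.2
    have h2 : φ T ≤ T := (hφmaps hmemT).2
    linarith [hfx ▸ h1]
  have hφ0 : φ 0 = 0 := by
    obtain ⟨x, hx, hfx⟩ := hφsurj hmem0
    have h1 : φ 0 ≤ φ x := hφmono hmem0 hx hx.1
    have h2 : 0 ≤ φ 0 := (hφmaps hmem0).1
    linarith [hfx ▸ h1]
  have hφdiff : Differentiable ℝ φ := hφ.differentiable one_ne_zero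
  -- main induction: for s ∈ [0,T], Sig^w_{s,T}(X∘φ) = Sig^w_{φ s,T}(X)
  have main : ∀ w : List (Fin d), ∀ s ∈ Set.Icc (0:ℝ) T,
      sigCoord (fun t => X (φ t)) s T w = sigCoord X (φ s) T w := by
    intro w
    induction w with
    | nil => intro s _; simp [sigCoord]
    | cons i w ih =>
      intro s hs
      have hXi : ContDiff ℝ 1 (fun v => X v i) :=
        (ContinuousLinearMap.proj (R := ℝ) (φ := fun _ : Fin d => ℝ) i).contDiff.comp hX
      have hXid : Differentiable ℝ (fun v => X v i) := hXi.differentiable one_ne_zero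
      set g : ℝ → ℝ := fun v => deriv (fun v => X v i) v * sigCoord X v T w with hg
      have hgcont : Continuous g :=
        (deriv_coord_continuous hX i).mul (sigCoord_continuous hX T w)
      have hsT : s ≤ T := hs.2
      have huIcc : Set.uIcc s T = Set.Icc s T := Set.uIcc_of_le hsT
      -- rewrite integrand
      have hcongr : ∀ u ∈ Set.uIcc s T,
          deriv (fun v => X (φ v) i) u * sigCoord (fun t => X (φ t)) u T w
            = deriv φ u • (g ∘ φ) u := by
        intro u hu
        rw [huIcc] at hu
        have humem : u ∈ Set.Icc (0:ℝ) T := ⟨le_trans hs.1 hu.1, hu.2⟩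
        have hchain : deriv (fun v => X (φ v) i) u
            = deriv (fun v => X v i) (φ u) * deriv φ u := by
          have : (fun v => X (φ v) i) = (fun v => X v i) ∘ φ := rfl
          rw [this, deriv_comp u (hXid _) (hφdiff _)]
        rw [hchain, ih u humem]
        simp [g, Function.comp]
        ring
      have step1 : sigCoord (fun t => X (φ t)) s T (i :: w)
          = ∫ u in s..T, deriv φ u • (g ∘ φ) u := by
        show (∫ u in s..T, deriv (fun v => X (φ v) i) u * sigCoord (fun t => X (φ t)) u T w)
          = _
        exact intervalIntegral.integral_congr hcongr
      have step2 : (∫ u in s..T, deriv φ u • (g ∘ φ) u) = ∫ v in φ s..φ T, g v :=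
        intervalIntegral.integral_comp_smul_deriv
          (fun x _ => (hφdiff x).hasDerivAt) (hφ.continuous_deriv le_rfl).continuousOn hgcont
      rw [step1, step2, hφT]
      rfl
  intro n w _
  have := main w 0 hmem0
  rwa [hφ0] at this
end

section
/- (Chen's identity.) Let Z : [a,c] → ℝ^d be a continuously differentiable path and let a ≤ b ≤ c, so that Z is the concatenation of its restriction x to [a,b] and its restriction y to [b,c]. Then for every n ∈ ℕ, the level-n signature of Z over [a,c] satisfies Sig^n_{a,c}(Z) = Σ_{k=0}^{n} Sig^k_{a,b}(Z) ⊗ Sig^{n−k}_{b,c}(Z), i.e. the full signature of the concatenated path is the tensor-algebra product of the signatures of the two pieces. -/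
/-!
Split the outermost integral `∫_a^c = ∫_a^b + ∫_b^c`. The piece over `[b,c]` is the `k = 0`
term. In the piece over `[a,b]`, expand the inner signature `Sig^w_{u,c}` by induction on the
word; integrating term by term against `X'_i` turns `Sig^{w₁⋯w_k}_{u,b}` into
`Sig^{i w₁⋯w_k}_{a,b}`, which are the remaining terms.
-/

open MeasureTheory intervalIntegral

namespace sigCoord

variable {d : ℕ} {X : ℝ → Fin d → ℝ}

@[simp]
theorem nil (s t : ℝ) : sigCoord X s t [] = 1 := by
  rw [sigCoord]

theorem cons (s t : ℝ) (i : Fin d) (w : List (Fin d)) :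
    sigCoord X s t (i :: w) = ∫ u in s..t, deriv (fun v => X v i) u * sigCoord X u t w := by
  rw [sigCoord]

theorem continuous_left (hX : ∀ i, Continuous (deriv fun v => X v i)) (t : ℝ) :
    ∀ w : List (Fin d), Continuous fun s => sigCoord X s t w
  | [] => by simpa using continuous_const
  | i :: w => by
    have hf : Continuous fun u => deriv (fun v => X v i) u * sigCoord X u t w :=
      (hX i).mul (continuous_left hX t w)
    simp_rw [cons, integral_symm t]
    exact (continuous_primitive (fun a b => hf.intervalIntegrable a b) t).neg

theorem eq_sum_take_mul_drop (hX : ∀ i, Continuous (deriv fun v => X v i)) (b c : ℝ) :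
    ∀ (w : List (Fin d)) (a : ℝ), sigCoord X a c w =
      ∑ k ∈ Finset.range (w.length + 1), sigCoord X a b (w.take k) * sigCoord X b c (w.drop k)
  | [], a => by simp
  | i :: w, a => by
    set f := fun u => deriv (fun v => X v i) u * sigCoord X u c w
    have hf : Continuous f := (hX i).mul (continuous_left hX c w)
    have hsplit : sigCoord X a c (i :: w) = (∫ u in a..b, f u) + ∫ u in b..c, f u := by
      rw [cons, integral_add_adjacent_intervals (hf.intervalIntegrable a b)
        (hf.intervalIntegrable b c)]
    have hleft : ∫ u in a..b, f u = ∑ k ∈ Finset.range (w.length + 1),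
        sigCoord X a b (i :: w.take k) * sigCoord X b c (w.drop k) := by
      have hterm (k : ℕ) : IntervalIntegrable
          (fun u => deriv (fun v => X v i) u * sigCoord X u b (w.take k) *
            sigCoord X b c (w.drop k)) volume a b :=
        (((hX i).mul (continuous_left hX b _)).mul continuous_const).intervalIntegrable a b
      simp only [f, eq_sum_take_mul_drop hX b c w, Finset.mul_sum, ← mul_assoc]
      rw [integral_finsetSum fun k _ => hterm k]
      simp only [intervalIntegral.integral_mul_const, cons]
    have hright : ∫ u in b..c, f u = sigCoord X b c (i :: w) := (cons b c i w).symm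
    rw [hsplit, hleft, hright, List.length_cons, Finset.sum_range_succ' _ (w.length + 1)]
    simp

end sigCoord

theorem chen_identity_general {d : ℕ} (Z : ℝ → Fin d → ℝ) (hZ : ContDiff ℝ 1 Z)
    (a b c : ℝ) :
    ∀ (n : ℕ) (w : List (Fin d)), w.length = n →
      sigCoord Z a c w =
        ∑ k ∈ Finset.range (n + 1),
          sigCoord Z a b (w.take k) * sigCoord Z b c (w.drop k) := by
  have hZ_deriv (i : Fin d) : Continuous (deriv fun v => Z v i) :=
    (contDiff_pi.mp hZ i).continuous_deriv le_rfl
  rintro n w rfl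
  exact sigCoord.eq_sum_take_mul_drop hZ_deriv b c w a

/-- **Chen's identity.**  Let `Z : [a,c] → ℝ^d` be a continuously differentiable path and
`a ≤ b ≤ c`, so that `Z` is the concatenation of its restrictions to `[a,b]` and `[b,c]`.
Then for every level `n`, i.e. for every word `w` of length `n`, the signature of `Z` over
`[a,c]` is the tensor-algebra product of the signatures over `[a,b]` and `[b,c]`.  In
coordinates: `Sig^w_{a,c}(Z) = Σ_{k=0}^{n} Sig^{w₁⋯w_k}_{a,b}(Z) · Sig^{w_{k+1}⋯w_n}_{b,c}(Z)`,
which is exactly the `w`-coordinate of `Σ_{k=0}^{n} Sig^k_{a,b}(Z) ⊗ Sig^{n-k}_{b,c}(Z)`. -/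
theorem chen_identity {d : ℕ} (Z : ℝ → Fin d → ℝ) (hZ : ContDiff ℝ 1 Z)
    (a b c : ℝ) (hab : a ≤ b) (hbc : b ≤ c) :
    ∀ (n : ℕ) (w : List (Fin d)), w.length = n →
      sigCoord Z a c w =
        ∑ k ∈ Finset.range (n + 1),
          sigCoord Z a b (w.take k) * sigCoord Z b c (w.drop k) :=
  chen_identity_general Z hZ a b c
end

section
/- (Shuffle product identity; signatures span an algebra.) Let X : [0,T] → ℝ^d be a continuously differentiable path and let I = (i_1,…,i_m) ∈ {1,…,d}^m and J = (j_1,…,j_n) ∈ {1,…,d}^n be multi-indices. Then the pointwise product of the two signature coordinates is itself a sum of signature coordinates over all shuffles of I and J: Sig^I_{0,T}(X) · Sig^J_{0,T}(X) = Σ_{K ∈ Sh(I,J)} Sig^K_{0,T}(X), where Sh(I,J) denotes the multiset of all multi-indices of length m+n obtained by interleaving I and J while preserving the internal order of each (i.e. all words K = (k_1,…,k_{m+n}) arising from a partition of {1,…,m+n} into an increasing subsequence carrying the letters of I in order and a complementary increasing subsequence carrying the letters of J in order). Consequently the linear span of signature coordinates of X is closed under multiplication. -/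
open MeasureTheory intervalIntegral

/-- `shuffles I J` is the multiset `Sh(I, J)` of all words of length `|I| + |J|` obtained by
interleaving `I` and `J` while preserving the internal order of each word (counted with
multiplicity). -/
def shuffles {α : Type*} : List α → List α → Multiset (List α)
  | [], l₂ => {l₂}
  | l₁, [] => {l₁}
  | a :: l₁, b :: l₂ =>
      (shuffles l₁ (b :: l₂)).map (a :: ·) + (shuffles (a :: l₁) l₂).map (b :: ·)
termination_by l₁ l₂ => l₁.length + l₂.length

section Aux

variable {d : ℕ} {X : ℝ → Fin d → ℝ}

lemma derivCont (hX : ContDiff ℝ 1 X) (i : Fin d) :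
    Continuous (deriv fun v => X v i) :=
  ((contDiff_pi.mp hX) i).continuous_deriv le_rfl

lemma sigCont (hX : ContDiff ℝ 1 X) (T : ℝ) :
    ∀ w : List (Fin d), Continuous fun s => sigCoord X s T w := by
  intro w
  induction w with
  | nil => simpa [sigCoord] using continuous_const
  | cons i w ih =>
    have hg : Continuous fun u => deriv (fun v => X v i) u * sigCoord X u T w :=
      (derivCont hX i).mul ih
    have hd : ∀ s : ℝ, HasDerivAt (fun s => sigCoord X s T (i :: w))
        (-(deriv (fun v => X v i) s * sigCoord X s T w)) s := by
      intro s
      have := intervalIntegral.integral_hasDerivAt_left (hg.intervalIntegrable s T)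
        (hg.stronglyMeasurableAtFilter _ _) hg.continuousAt
      simpa [sigCoord] using this
    exact Differentiable.continuous fun s => (hd s).differentiableAt

lemma sigHasDeriv (hX : ContDiff ℝ 1 X) (T : ℝ) (i : Fin d) (w : List (Fin d)) (s : ℝ) :
    HasDerivAt (fun s => sigCoord X s T (i :: w))
      (-(deriv (fun v => X v i) s * sigCoord X s T w)) s := by
  have hg : Continuous fun u => deriv (fun v => X v i) u * sigCoord X u T w :=
    (derivCont hX i).mul (sigCont hX T w)
  have := intervalIntegral.integral_hasDerivAt_left (hg.intervalIntegrable s T)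
    (hg.stronglyMeasurableAtFilter _ _) hg.continuousAt
  simpa [sigCoord] using this

lemma multiset_hasDerivAt {α : Type*} (m : Multiset α) (g : α → ℝ → ℝ) (g' : α → ℝ) (s : ℝ)
    (h : ∀ a ∈ m, HasDerivAt (g a) (g' a) s) :
    HasDerivAt (fun s => (m.map (fun a => g a s)).sum) ((m.map g').sum) s := by
  induction m using Multiset.induction with
  | empty => simpa using hasDerivAt_const s (0 : ℝ)
  | cons a m ih =>
    simp only [Multiset.map_cons, Multiset.sum_cons]
    exact (h a (Multiset.mem_cons_self a m)).add
      (ih fun b hb => h b (Multiset.mem_cons_of_mem hb))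

lemma sig_zero_same (X : ℝ → Fin d → ℝ) (T : ℝ) (i : Fin d) (w : List (Fin d)) :
    sigCoord X T T (i :: w) = 0 := by
  simp [sigCoord]

lemma key (hX : ContDiff ℝ 1 X) :
    ∀ (n : ℕ) (I J : List (Fin d)), I.length + J.length = n → ∀ (T s : ℝ),
      sigCoord X s T I * sigCoord X s T J
        = ((shuffles I J).map (fun K => sigCoord X s T K)).sum := by
  intro n
  induction n with
  | zero =>
    intro I J hlen T s
    obtain ⟨hI, hJ⟩ : I = [] ∧ J = [] := by
      constructor <;> [exact List.length_eq_zero_iff.mp (by omega); exact List.length_eq_zero_iff.mp (by omega)]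
    subst hI; subst hJ
    simp [shuffles, sigCoord]
  | succ n ih =>
    intro I J hlen T s
    match I, J with
    | [], J => simp [shuffles, sigCoord]
    | a :: I', [] => simp [shuffles, sigCoord]
    | a :: I', b :: J' =>
      -- set up functions
      set fa : ℝ → ℝ := deriv fun v => X v a with hfa
      set fb : ℝ → ℝ := deriv fun v => X v b with hfb
      have hlen1 : I'.length + (b :: J').length = n := by
        simp at hlen ⊢; omega
      have hlen2 : (a :: I').length + J'.length = n := by
        simp at hlen ⊢; omega
      set F : ℝ → ℝ := fun s =>
        sigCoord X s T (a :: I') * sigCoord X s T (b :: J')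
          - ((shuffles (a :: I') (b :: J')).map (fun K => sigCoord X s T K)).sum with hF
      have hRHS : ∀ s : ℝ, ((shuffles (a :: I') (b :: J')).map (fun K => sigCoord X s T K)).sum
          = ((shuffles I' (b :: J')).map (fun K => sigCoord X s T (a :: K))).sum
            + ((shuffles (a :: I') J').map (fun K => sigCoord X s T (b :: K))).sum := by
        intro s
        rw [shuffles]
        simp [Multiset.map_add, Multiset.sum_add, Multiset.map_map, Function.comp]
      have hderivF : ∀ s : ℝ, HasDerivAt F 0 s := by
        intro s
        have h1 : HasDerivAt (fun s => sigCoord X s T (a :: I') * sigCoord X s T (b :: J'))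
            (-(fa s * sigCoord X s T I') * sigCoord X s T (b :: J')
              + sigCoord X s T (a :: I') * -(fb s * sigCoord X s T J')) s :=
          (sigHasDeriv hX T a I' s).mul (sigHasDeriv hX T b J' s)
        have h2 : HasDerivAt
            (fun s => ((shuffles I' (b :: J')).map (fun K => sigCoord X s T (a :: K))).sum)
            (((shuffles I' (b :: J')).map (fun K => -(fa s * sigCoord X s T K))).sum) s :=
          multiset_hasDerivAt _ _ _ s (fun K _ => sigHasDeriv hX T a K s)
        have h3 : HasDerivAt
            (fun s => ((shuffles (a :: I') J').map (fun K => sigCoord X s T (b :: K))).sum)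
            (((shuffles (a :: I') J').map (fun K => -(fb s * sigCoord X s T K))).sum) s :=
          multiset_hasDerivAt _ _ _ s (fun K _ => sigHasDeriv hX T b K s)
        have h4 : HasDerivAt
            (fun s => ((shuffles (a :: I') (b :: J')).map (fun K => sigCoord X s T K)).sum)
            (((shuffles I' (b :: J')).map (fun K => -(fa s * sigCoord X s T K))).sum
              + ((shuffles (a :: I') J').map (fun K => -(fb s * sigCoord X s T K))).sum) s := by
          refine HasDerivAt.congr_of_eventuallyEq (h2.add h3) ?_
          exact Filter.Eventually.of_forall fun x => (hRHS x)
        have hsum1 : ((shuffles I' (b :: J')).map (fun K => -(fa s * sigCoord X s T K))).sum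
            = -(fa s * (sigCoord X s T I' * sigCoord X s T (b :: J'))) := by
          rw [ih I' (b :: J') hlen1 T s]
          rw [← Multiset.sum_map_mul_left]
          simp [Multiset.sum_map_neg']
        have hsum2 : ((shuffles (a :: I') J').map (fun K => -(fb s * sigCoord X s T K))).sum
            = -(fb s * (sigCoord X s T (a :: I') * sigCoord X s T J')) := by
          rw [ih (a :: I') J' hlen2 T s]
          rw [← Multiset.sum_map_mul_left]
          simp [Multiset.sum_map_neg']
        have := h1.sub h4
        rw [hsum1, hsum2] at this
        convert this using 1
        case e'_9 => ring
        all_goals rfl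
      have hFT : F T = 0 := by
        have hz : ((shuffles (a :: I') (b :: J')).map (fun K => sigCoord X T T K)).sum = 0 := by
          rw [hRHS T]
          simp [sig_zero_same]
        simp [hF, sig_zero_same, hz]
      have : F s = F T :=
        is_const_of_deriv_eq_zero (fun x => (hderivF x).differentiableAt)
          (fun x => (hderivF x).deriv) s T
      have hFs : F s = 0 := this.trans hFT
      have := sub_eq_zero.mp hFs
      exact this

end Aux

/-- **Shuffle product identity (signatures span an algebra).**  For a continuously
differentiable path `X : [0,T] → ℝ^d` and any multi-indices `I ∈ {1,…,d}^m`,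
`J ∈ {1,…,d}^n`, the pointwise product of the corresponding signature coordinates is the sum
of the signature coordinates over all shuffles of `I` and `J`:
`Sig^I_{0,T}(X) · Sig^J_{0,T}(X) = Σ_{K ∈ Sh(I,J)} Sig^K_{0,T}(X)`.
In particular, the linear span of the signature coordinates of `X` is closed under
multiplication. -/
theorem sig_shuffle_product {d : ℕ} (T : ℝ) (hT : 0 ≤ T) (X : ℝ → Fin d → ℝ)
    (hX : ContDiff ℝ 1 X) (I J : List (Fin d)) :
    sigCoord X 0 T I * sigCoord X 0 T J
      = ((shuffles I J).map (fun K => sigCoord X 0 T K)).sum :=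
  key hX (I.length + J.length) I J rfl T 0
end
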